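/- For every finite simple graph G with at least one vertex there exists a proper coloring c of G whose image has at most 2·χ(G) − 1 elements (i.e., c uses at most 2·χ(G) − 1 colors) such that some dominating set of G of size γ(G) is an up-color dominating c-set; in particular the minimum cardinality of an up-color dominating c-set equals γ(G). -/

import Mathlib

/-!
Take a minimum dominating set `D` and a proper coloring `C` with `k = χ(G)` colors `0, …, k - 1`.
Keep the colors `C v + 1 ∈ [1, k]` off `D` and reflect them to `2k - 1 - C v ∈ [k, 2k - 1]` on `D`.
The two ranges meet only in `k`, which both halves assign to color class `k - 1`; so the new coloring
is proper, uses at most `2k - 1` colors, and every vertex outside `D` sees a strictly larger color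
on any neighbour in `D`, since two distinct old colors sum to at most `2k - 3`.
-/

/-- `D` is an up-color dominating `c`-set of `G`. -/
def IsUCDomSet {V : Type*} (G : SimpleGraph V) (c : V → ℕ) (D : Finset V) : Prop :=
  (∀ v ∉ D, ∃ d ∈ D, G.Adj v d ∧ c v < c d) ∧ ∀ d ∈ D, 1 ≤ c d

/-- `D` is a dominating set of `G`. -/
def IsDomSet {V : Type*} (G : SimpleGraph V) (D : Finset V) : Prop :=
  ∀ v ∉ D, ∃ d ∈ D, G.Adj v d

/-- The domination number of `G`. -/
noncomputable def domNum (V : Type*) [Fintype V] (G : SimpleGraph V) : ℕ :=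
  sInf {n | ∃ D : Finset V, IsDomSet G D ∧ D.card = n}

/-- The chromatic number of `G` (as a natural number). -/
noncomputable def chromNum {V : Type*} (G : SimpleGraph V) : ℕ :=
  sInf {n | G.Colorable n}

namespace SimpleGraph

variable {V : Type*} {G : SimpleGraph V}

theorem IsUCDomSet.isDomSet {c : V → ℕ} {D : Finset V} (h : IsUCDomSet G c D) : IsDomSet G D :=
  fun v hv ↦ (h.1 v hv).imp fun _ ⟨hd, hadj, _⟩ ↦ ⟨hd, hadj⟩

theorem domNum_le_card [Fintype V] {D : Finset V} (h : IsDomSet G D) : domNum V G ≤ D.card :=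
  Nat.sInf_le ⟨D, h, rfl⟩

theorem exists_isDomSet_card_eq_domNum [Fintype V] :
    ∃ D : Finset V, IsDomSet G D ∧ D.card = domNum V G :=
  Nat.sInf_mem (s := {n | ∃ D : Finset V, IsDomSet G D ∧ D.card = n})
    ⟨_, Finset.univ, fun v hv ↦ absurd (Finset.mem_univ v) hv, rfl⟩

theorem colorable_chromNum [Fintype V] : G.Colorable (chromNum G) :=
  Nat.sInf_mem (s := {n | G.Colorable n}) ⟨_, G.colorable_of_fintype⟩

def reflectColoring [DecidableEq V] {k : ℕ} (C : V → Fin k) (D : Finset V) (v : V) : ℕ :=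
  if v ∈ D then 2 * k - 1 - C v else C v + 1

section reflectColoring

variable [DecidableEq V] {k : ℕ} (C : G.Coloring (Fin k)) (D : Finset V)

theorem reflectColoring_mem_Icc (v : V) : reflectColoring C D v ∈ Finset.Icc 1 (2 * k - 1) := by
  have := (C v).isLt
  unfold reflectColoring
  split_ifs <;> simp only [Finset.mem_Icc] <;> omega

theorem reflectColoring_ne_of_adj {u v : V} (huv : G.Adj u v) :
    reflectColoring C D u ≠ reflectColoring C D v := by
  have hne : (C u : ℕ) ≠ C v := Fin.val_injective.ne (C.valid huv)
  have := (C u).isLt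
  have := (C v).isLt
  unfold reflectColoring
  split_ifs <;> omega

theorem card_image_reflectColoring_le [Fintype V] :
    (Finset.univ.image (reflectColoring C D)).card ≤ 2 * k - 1 :=
  calc (Finset.univ.image (reflectColoring C D)).card
      ≤ (Finset.Icc 1 (2 * k - 1)).card :=
        Finset.card_le_card (Finset.image_subset_iff.2 fun v _ ↦ reflectColoring_mem_Icc C D v)
    _ = 2 * k - 1 := by simp

theorem isUCDomSet_reflectColoring (hD : IsDomSet G D) : IsUCDomSet G (reflectColoring C D) D := by
  refine ⟨fun v hv ↦ ?_, fun d _ ↦ (Finset.mem_Icc.1 (reflectColoring_mem_Icc C D d)).1⟩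
  obtain ⟨d, hd, hadj⟩ := hD v hv
  refine ⟨d, hd, hadj, ?_⟩
  have hne : (C v : ℕ) ≠ C d := Fin.val_injective.ne (C.valid hadj)
  have := (C v).isLt
  have := (C d).isLt
  simp only [reflectColoring, if_pos hd, if_neg hv]
  omega

end reflectColoring

end SimpleGraph

open SimpleGraph in
theorem stmt_4_general {V : Type*} [Fintype V] (G : SimpleGraph V) :
    ∃ c : V → ℕ, (∀ ⦃u v⦄, G.Adj u v → c u ≠ c v) ∧
      (Finset.univ.image c).card ≤ 2 * chromNum G - 1 ∧
      (∃ D : Finset V, IsDomSet G D ∧ D.card = domNum V G ∧ IsUCDomSet G c D) ∧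
      (∀ D : Finset V, IsUCDomSet G c D → domNum V G ≤ D.card) := by
  classical
  obtain ⟨D, hD, hDcard⟩ := exists_isDomSet_card_eq_domNum (G := G)
  obtain ⟨C⟩ := colorable_chromNum (G := G)
  exact ⟨reflectColoring C D, fun _ _ ↦ reflectColoring_ne_of_adj C D,
    card_image_reflectColoring_le C D, ⟨D, hD, hDcard, isUCDomSet_reflectColoring C D hD⟩,
    fun _ h ↦ domNum_le_card h.isDomSet⟩

theorem stmt_4 {V : Type*} [Fintype V] [Nonempty V] (G : SimpleGraph V) :
    ∃ c : V → ℕ, (∀ ⦃u v⦄, G.Adj u v → c u ≠ c v) ∧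
      (Finset.univ.image c).card ≤ 2 * chromNum G - 1 ∧
      (∃ D : Finset V, IsDomSet G D ∧ D.card = domNum V G ∧ IsUCDomSet G c D) ∧
      (∀ D : Finset V, IsUCDomSet G c D → domNum V G ≤ D.card) :=
  stmt_4_general G
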